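/- arXiv:math/0512561 — 3 statements merged into one kernel-verified Lean document; each statement's English description precedes it below -/
import Mathlib

section
/- Let k ≥ 1 be an integer, C > 0 and T > 0 real numbers, and let β : ℝ → ℝ be nonnegative and nondecreasing on [0,T] with β(s) > 0 for every s ∈ (0,T]. Assume that for almost every s ∈ (0,T), whenever β is differentiable at s with derivative β′(s), one has β(s) ≤ 3C·β′(s)^{(k+1)/k}. Then β(s) ≥ s^{k+1}/((3C)^k·(k+1)^{k+1}) for every s ∈ [0,T]. -/
/-!
Put `g = β ^ (1 / (k + 1))`. Wherever `β` is differentiable on `(0, T)`, the differential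
inequality gives `β' ≥ (β / 3C) ^ (k / (k + 1))`, so by the chain rule
`g' = β' β ^ (-k / (k + 1)) / (k + 1) ≥ c := 1 / ((k + 1) (3C) ^ (k / (k + 1)))`, a bound in
which `β` has cancelled out. As `g` is monotone, `g s - g 0 ≥ ∫₀ˢ g' ≥ c s`, and raising
`g s ≥ c s` to the power `k + 1` is the claim.
-/

open MeasureTheory Set

theorem MonotoneOn.mul_sub_le_sub_of_ae_le_deriv {f : ℝ → ℝ} {a b c : ℝ} (hab : a ≤ b)
    (hf : MonotoneOn f (Icc a b)) (hc : ∀ᵐ x, x ∈ Ioo a b → c ≤ deriv f x) :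
    c * (b - a) ≤ f b - f a := by
  have hf' : MonotoneOn f (uIcc a b) := by rwa [uIcc_of_le hab]
  calc c * (b - a) = ∫ _ in a..b, c := by simp [mul_comm]
    _ ≤ ∫ x in a..b, deriv f x := by
      refine intervalIntegral.integral_mono_ae_restrict hab intervalIntegrable_const
        hf'.intervalIntegrable_deriv ?_
      rw [Filter.EventuallyLE, ← restrict_Ioo_eq_restrict_Icc, ae_restrict_iff' measurableSet_Ioo]
      exact hc
    _ ≤ f b - f a := by
      have hfab : 0 ≤ f b - f a := sub_nonneg.2 (hf ⟨le_rfl, hab⟩ ⟨hab, le_rfl⟩ hab)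
      exact (uIcc_of_le hfab ▸ hf'.intervalIntegral_deriv_mem_uIcc).2

theorem MonotoneOn.ae_differentiableAt_of_mem_Ioo {f : ℝ → ℝ} {a b : ℝ}
    (hf : MonotoneOn f (Icc a b)) : ∀ᵐ x, x ∈ Ioo a b → DifferentiableAt ℝ f x := by
  filter_upwards [hf.ae_differentiableWithinAt_of_mem] with x hx hxab
  exact (hx (Ioo_subset_Icc_self hxab)).differentiableAt (Icc_mem_nhds hxab.1 hxab.2)

theorem MonotoneOn.deriv_nonneg_of_mem_Ioo {f : ℝ → ℝ} {a b x : ℝ}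
    (hf : MonotoneOn f (Icc a b)) (hx : x ∈ Ioo a b) : 0 ≤ deriv f x := by
  rw [← derivWithin_of_mem_nhds (Icc_mem_nhds hx.1 hx.2)]
  exact hf.derivWithin_nonneg

theorem Real.rpow_inv_le_of_le_mul_rpow {y d K q : ℝ} (hy : 0 ≤ y) (hd : 0 ≤ d) (hK : 0 < K)
    (hq : 0 < q) (h : y ≤ K * d ^ q) : (y / K) ^ q⁻¹ ≤ d := by
  rw [Real.rpow_inv_le_iff_of_pos (by positivity) hd hq, div_le_iff₀' hK]
  exact h

theorem inv_mul_inv_rpow_le_deriv_rpow_inv {β : ℝ → ℝ} {κ K x d : ℝ} (hκ : 0 < κ) (hK : 0 < K)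
    (hβx : 0 < β x) (hβ : HasDerivAt β d x) (hd : 0 ≤ d) (h : β x ≤ K * d ^ ((κ + 1) / κ)) :
    (κ + 1)⁻¹ * (K ^ (κ / (κ + 1)))⁻¹ ≤ deriv (fun y ↦ β y ^ (κ + 1)⁻¹) x := by
  have hd' : (β x / K) ^ (κ / (κ + 1)) ≤ d := by
    simpa only [inv_div] using Real.rpow_inv_le_of_le_mul_rpow hβx.le hd hK (by positivity) h
  have hexp : (κ + 1)⁻¹ - 1 = -(κ / (κ + 1)) := by field_simp; ring
  rw [(hβ.rpow_const (Or.inl hβx.ne')).deriv]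
  calc (κ + 1)⁻¹ * (K ^ (κ / (κ + 1)))⁻¹
      = (β x / K) ^ (κ / (κ + 1)) * (κ + 1)⁻¹ * β x ^ ((κ + 1)⁻¹ - 1) := by
        rw [Real.div_rpow hβx.le hK.le, hexp, Real.rpow_neg hβx.le]
        have : 0 < β x ^ (κ / (κ + 1)) := by positivity
        field_simp
    _ ≤ d * (κ + 1)⁻¹ * β x ^ ((κ + 1)⁻¹ - 1) := by gcongr

theorem MonotoneOn.rpow_div_le_of_ae_le_mul_deriv_rpow {β : ℝ → ℝ} {κ K T : ℝ} (hκ : 0 < κ)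
    (hK : 0 < K) (hnonneg : ∀ s ∈ Icc 0 T, 0 ≤ β s) (hmono : MonotoneOn β (Icc 0 T))
    (hpos : ∀ s ∈ Ioc 0 T, 0 < β s)
    (hae : ∀ᵐ s, s ∈ Ioo 0 T → ∀ d, HasDerivAt β d s → β s ≤ K * d ^ ((κ + 1) / κ)) :
    ∀ s ∈ Icc 0 T, s ^ (κ + 1) / (K ^ κ * (κ + 1) ^ (κ + 1)) ≤ β s := by
  intro s hs
  rcases hs.1.eq_or_lt with rfl | hs0
  · simpa [Real.zero_rpow (by positivity : κ + 1 ≠ 0)] using hnonneg 0 hs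
  set c := (κ + 1)⁻¹ * (K ^ (κ / (κ + 1)))⁻¹
  have hsT : Icc 0 s ⊆ Icc 0 T := Icc_subset_Icc_right hs.2
  have hg : MonotoneOn (fun x ↦ β x ^ (κ + 1)⁻¹) (Icc 0 s) := fun x hx y hy hxy ↦
    Real.rpow_le_rpow (hnonneg x (hsT hx)) (hmono (hsT hx) (hsT hy) hxy) (by positivity)
  have hderiv : ∀ᵐ x, x ∈ Ioo 0 s → c ≤ deriv (fun y ↦ β y ^ (κ + 1)⁻¹) x := by
    filter_upwards [hae, hmono.ae_differentiableAt_of_mem_Ioo] with x hx hdiff hxs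
    have hxT : x ∈ Ioo 0 T := ⟨hxs.1, hxs.2.trans_le hs.2⟩
    have hβ := (hdiff hxT).hasDerivAt
    exact inv_mul_inv_rpow_le_deriv_rpow_inv hκ hK (hpos x ⟨hxT.1, hxT.2.le⟩) hβ
      (hmono.deriv_nonneg_of_mem_Ioo hxT) (hx hxT _ hβ)
  have hcs : c * s ≤ β s ^ (κ + 1)⁻¹ := by
    have hg0 : 0 ≤ β 0 ^ (κ + 1)⁻¹ := Real.rpow_nonneg (hnonneg 0 ⟨le_rfl, hs.1.trans hs.2⟩) _
    have hgs := hg.mul_sub_le_sub_of_ae_le_deriv hs.1 hderiv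
    rw [sub_zero] at hgs
    linarith
  have hKpow : (K ^ (κ / (κ + 1))) ^ (κ + 1) = K ^ κ := by
    rw [← Real.rpow_mul hK.le, div_mul_cancel₀ _ (by positivity)]
  calc s ^ (κ + 1) / (K ^ κ * (κ + 1) ^ (κ + 1)) = (c * s) ^ (κ + 1) := by
        rw [Real.mul_rpow (by positivity) hs.1, Real.mul_rpow (by positivity) (by positivity),
          Real.inv_rpow (by positivity), Real.inv_rpow (by positivity), hKpow]
        field_simp
    _ ≤ (β s ^ (κ + 1)⁻¹) ^ (κ + 1) := Real.rpow_le_rpow (by positivity) hcs (by positivity)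
    _ = β s := by
      rw [← Real.rpow_mul (hnonneg s hs), inv_mul_cancel₀ (by positivity), Real.rpow_one]

theorem growth_estimate_euclidean_general (k : ℕ) (hk : 1 ≤ k) (C T : ℝ) (hC : 0 < C)
    (β : ℝ → ℝ)
    (hnonneg : ∀ s ∈ Set.Icc (0:ℝ) T, 0 ≤ β s)
    (hmono : MonotoneOn β (Set.Icc (0:ℝ) T))
    (hpos : ∀ s ∈ Set.Ioc (0:ℝ) T, 0 < β s)
    (hae : ∀ᵐ s ∂volume, s ∈ Set.Ioo (0:ℝ) T → ∀ d : ℝ, HasDerivAt β d s →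
      β s ≤ 3 * C * d ^ (((k : ℝ) + 1) / (k : ℝ))) :
    ∀ s ∈ Set.Icc (0:ℝ) T, s ^ (k + 1) / ((3 * C) ^ k * ((k : ℝ) + 1) ^ (k + 1)) ≤ β s := by
  intro s hs
  have h := hmono.rpow_div_le_of_ae_le_mul_deriv_rpow (Nat.cast_pos.2 hk) (by positivity)
    hnonneg hpos hae s hs
  exact_mod_cast h

/-- **Euclidean-type growth estimate (Lemma 3.1 of the paper).**
Let `k ≥ 1`, `C > 0`, `T > 0` and let `β : ℝ → ℝ` be nonnegative and nondecreasing on `[0,T]`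
with `β(s) > 0` for `s ∈ (0,T]`.  If for almost every `s ∈ (0,T)`, whenever `β` is
differentiable at `s` with derivative `β′(s)`, one has `β(s) ≤ 3C·β′(s)^((k+1)/k)`, then
`β(s) ≥ s^(k+1)/((3C)^k·(k+1)^(k+1))` for every `s ∈ [0,T]`. -/
theorem growth_estimate_euclidean (k : ℕ) (hk : 1 ≤ k) (C T : ℝ) (hC : 0 < C) (hT : 0 < T)
    (β : ℝ → ℝ)
    (hnonneg : ∀ s ∈ Set.Icc (0:ℝ) T, 0 ≤ β s)
    (hmono : MonotoneOn β (Set.Icc (0:ℝ) T))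
    (hpos : ∀ s ∈ Set.Ioc (0:ℝ) T, 0 < β s)
    (hae : ∀ᵐ s ∂volume, s ∈ Set.Ioo (0:ℝ) T → ∀ d : ℝ, HasDerivAt β d s →
      β s ≤ 3 * C * d ^ (((k : ℝ) + 1) / (k : ℝ))) :
    ∀ s ∈ Set.Icc (0:ℝ) T, s ^ (k + 1) / ((3 * C) ^ k * ((k : ℝ) + 1) ^ (k + 1)) ≤ β s :=
  growth_estimate_euclidean_general k hk C T hC β hnonneg hmono hpos hae
end

section
/- Let k ≥ 1 be an integer and C > 0 a real number, set s₀ := 3C(k+1), and let T ≥ s₀. Let β : ℝ → ℝ be nonnegative and nondecreasing on [0,T] with β(s₀) ≥ 3C. Assume that for almost every s ∈ (s₀,T), whenever β is differentiable at s with derivative β′(s), one has β(s) ≤ 3C·β′(s). Then for every s ∈ [s₀,T] one has β(s) ≥ 3C·exp(s/(3C) − (k+1)). -/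
open MeasureTheory

/-- **Exponential growth estimate (Lemma 3.1 of the paper, linear isoperimetric inequality).**
Let `k ≥ 1`, `C > 0`, set `s₀ := 3C(k+1)`, and let `T ≥ s₀`.  Let `β : ℝ → ℝ` be nonnegative
and nondecreasing on `[0,T]` with `β(s₀) ≥ 3C`.  If for almost every `s ∈ (s₀,T)`, whenever
`β` is differentiable at `s` with derivative `β′(s)`, one has `β(s) ≤ 3C·β′(s)`, then
`β(s) ≥ 3C·exp(s/(3C) − (k+1))` for every `s ∈ [s₀,T]`. -/
theorem growth_estimate_exponential (k : ℕ) (hk : 1 ≤ k) (C : ℝ) (hC : 0 < C)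
    (T : ℝ) (hT : 3 * C * ((k : ℝ) + 1) ≤ T) (β : ℝ → ℝ)
    (hnonneg : ∀ s ∈ Set.Icc (0:ℝ) T, 0 ≤ β s)
    (hmono : MonotoneOn β (Set.Icc (0:ℝ) T))
    (hβs₀ : 3 * C ≤ β (3 * C * ((k : ℝ) + 1)))
    (hae : ∀ᵐ s ∂volume, s ∈ Set.Ioo (3 * C * ((k : ℝ) + 1)) T → ∀ d : ℝ, HasDerivAt β d s →
      β s ≤ 3 * C * d) :
    ∀ s ∈ Set.Icc (3 * C * ((k : ℝ) + 1)) T,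
      3 * C * Real.exp (s / (3 * C) - ((k : ℝ) + 1)) ≤ β s := by
  set c : ℝ := 3 * C with hc_def
  have hc : 0 < c := by positivity
  set s₀ : ℝ := c * ((k : ℝ) + 1) with hs₀_def
  have hs₀0 : 0 ≤ s₀ := by positivity
  have hs₀T : s₀ ≤ T := hT
  -- the clamp of x to [s₀, T]
  set π : ℝ → ℝ := fun x => max s₀ (min x T) with hπ_def
  have hπmem : ∀ x, π x ∈ Set.Icc (0:ℝ) T := by
    intro x
    refine ⟨le_trans hs₀0 (le_max_left _ _), ?_⟩
    exact max_le hs₀T (min_le_right _ _)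
  have hπmem' : ∀ x, s₀ ≤ π x := fun x => le_max_left _ _
  have hπmono : Monotone π := fun x y h =>
    max_le_max le_rfl (min_le_min h le_rfl)
  have hπ_eq : ∀ x ∈ Set.Ioo s₀ T, π x = x := by
    intro x hx
    simp only [hπ_def]
    rw [min_eq_left hx.2.le, max_eq_right hx.1.le]
  -- the globally monotone modification of β
  set g : ℝ → ℝ := fun x => β (π x) with hg_def
  have hgmono : Monotone g := fun x y h => hmono (hπmem x) (hπmem y) (hπmono h)
  have hs₀mem : (s₀ : ℝ) ∈ Set.Icc (0:ℝ) T := ⟨hs₀0, hs₀T⟩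
  have hgpos : ∀ x, c ≤ g x := by
    intro x
    calc c ≤ β s₀ := hβs₀
    _ ≤ β (π x) := hmono hs₀mem (hπmem x) (hπmem' x)
  have hgpos' : ∀ x, 0 < g x := fun x => lt_of_lt_of_le hc (hgpos x)
  -- f = log ∘ g
  set f : ℝ → ℝ := fun x => Real.log (g x) with hf_def
  have hfmono : Monotone f := fun x y h =>
    Real.log_le_log (hgpos' x) (hgmono h)
  set ν : Measure ℝ := hfmono.stieltjesFunction.measure with hν_def
  -- a.e. lower bound on the Radon-Nikodym derivative
  have key_ae : ∀ᵐ x ∂volume, x ∈ Set.Ioo s₀ T →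
      ENNReal.ofReal (1 / c) ≤ ν.rnDeriv volume x := by
    filter_upwards [hfmono.ae_hasDerivAt, hgmono.ae_hasDerivAt, hae] with x hfx hgx haex hx
    -- g = β near x
    have hnb : Set.Ioo s₀ T ∈ nhds x := isOpen_Ioo.mem_nhds hx
    have heq : g =ᶠ[nhds x] β := by
      filter_upwards [hnb] with y hy
      simp only [hg_def]
      rw [hπ_eq y hy]
    have hβd : HasDerivAt β ((hgmono.stieltjesFunction.measure.rnDeriv volume x).toReal) x :=
      hgx.congr_of_eventuallyEq heq.symm
    set D : ℝ := (hgmono.stieltjesFunction.measure.rnDeriv volume x).toReal with hD_def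
    have hβx : β x ≤ c * D := haex hx D hβd
    have hgx_eq : g x = β x := by simp only [hg_def]; rw [hπ_eq x hx]
    have hgxpos : 0 < g x := hgpos' x
    -- derivative of f at x is D / g x
    have hflog : HasDerivAt f (D / g x) x := hgx.log (ne_of_gt hgxpos)
    have huniq : (ν.rnDeriv volume x).toReal = D / g x := hfx.unique hflog
    have hge : 1 / c ≤ D / g x := by
      rw [div_le_div_iff₀ hc hgxpos]
      rw [hgx_eq]
      nlinarith
    by_cases htop : ν.rnDeriv volume x = ⊤
    · rw [htop]; exact le_top
    · rw [← ENNReal.ofReal_toReal htop]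
      exact ENNReal.ofReal_le_ofReal (by rw [huniq]; exact hge)
  -- main integral estimate: for s₀ ≤ u < s ≤ T, (u - s₀)/c ≤ f s - f s₀
  have key : ∀ s ∈ Set.Icc s₀ T, ∀ u, s₀ ≤ u → u < s → (u - s₀) / c ≤ f s - f s₀ := by
    intro s hs u hu hus
    have husT : u < T := lt_of_lt_of_le hus hs.2
    have hsub : Set.Ioc s₀ u ⊆ Set.Ioo s₀ T := fun y hy => ⟨hy.1, lt_of_le_of_lt hy.2 husT⟩
    have step1 : ENNReal.ofReal ((u - s₀) / c) =
        ENNReal.ofReal (1 / c) * volume (Set.Ioc s₀ u) := by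
      rw [Real.volume_Ioc, ← ENNReal.ofReal_mul (by positivity)]
      congr 1
      field_simp
    have step2 : ENNReal.ofReal (1 / c) * volume (Set.Ioc s₀ u) ≤
        ∫⁻ x in Set.Ioc s₀ u, ν.rnDeriv volume x ∂volume := by
      rw [← setLIntegral_const]
      refine lintegral_mono_ae ?_
      filter_upwards [ae_restrict_of_ae key_ae, ae_restrict_mem measurableSet_Ioc]
        with x hx hmem
      exact hx (hsub hmem)
    have step3 : ∫⁻ x in Set.Ioc s₀ u, ν.rnDeriv volume x ∂volume ≤ ν (Set.Ioc s₀ u) := by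
      rw [← withDensity_apply _ measurableSet_Ioc]
      exact Measure.withDensity_rnDeriv_le ν volume _
    have step4 : ν (Set.Ioc s₀ u) =
        ENNReal.ofReal (hfmono.stieltjesFunction u - hfmono.stieltjesFunction s₀) :=
      hfmono.stieltjesFunction.measure_Ioc s₀ u
    have hFmono : hfmono.stieltjesFunction s₀ ≤ hfmono.stieltjesFunction u :=
      hfmono.stieltjesFunction.mono hu
    have h1 : (u - s₀) / c ≤ hfmono.stieltjesFunction u - hfmono.stieltjesFunction s₀ := by
      rw [← ENNReal.ofReal_le_ofReal_iff (by linarith)]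
      calc ENNReal.ofReal ((u - s₀) / c) = _ := step1
      _ ≤ _ := step2
      _ ≤ _ := step3
      _ = _ := step4
    have h2 : hfmono.stieltjesFunction u ≤ f s := by
      rw [hfmono.stieltjesFunction_eq]
      exact hfmono.rightLim_le hus
    have h3 : f s₀ ≤ hfmono.stieltjesFunction s₀ := by
      rw [hfmono.stieltjesFunction_eq]
      exact hfmono.le_rightLim le_rfl
    linarith
  -- conclude
  intro s hs
  have hmain : (s - s₀) / c ≤ f s - f s₀ := by
    rcases eq_or_lt_of_le hs.1 with heq | hlt
    · rw [← heq]; simp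
    · by_contra h
      push_neg at h
      have hd0 : 0 ≤ f s - f s₀ := sub_nonneg.2 (hfmono hs.1)
      rw [lt_div_iff₀ hc] at h
      have hX : 0 ≤ (f s - f s₀) * c := mul_nonneg hd0 hc.le
      have hkey := key s hs ((s₀ + (f s - f s₀) * c + s) / 2) (by linarith) (by linarith)
      rw [div_le_iff₀ hc] at hkey
      linarith
  -- translate back to β
  have hgs : g s = β s := by
    simp only [hg_def]
    rcases eq_or_lt_of_le hs.1 with heq | hlt
    · rw [← heq]
      simp only [hπ_def]
      rw [min_eq_left hs₀T, max_self]
    · rcases eq_or_lt_of_le hs.2 with heqT | hltT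
      · rw [heqT]
        simp only [hπ_def]
        rw [min_self, max_eq_right hs₀T]
      · rw [hπ_eq s ⟨hlt, hltT⟩]
  have hgs₀ : g s₀ = β s₀ := by
    simp only [hg_def, hπ_def]
    rw [min_eq_left hs₀T, max_self]
  have hlogβ : Real.log c + (s - s₀) / c ≤ Real.log (β s) := by
    have hfs₀ : Real.log c ≤ f s₀ := by
      rw [hf_def]
      simp only [hgs₀]
      exact Real.log_le_log hc hβs₀
    have : f s = Real.log (β s) := by rw [hf_def]; simp only [hgs]
    linarith [hmain, hfs₀, this.symm.le, this.le]
  have hβspos : 0 < β s := by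
    rw [← hgs]; exact hgpos' s
  calc c * Real.exp (s / c - ((k : ℝ) + 1))
      = Real.exp (Real.log c + (s - s₀) / c) := by
        rw [Real.exp_add, Real.exp_log hc]
        congr 2
        rw [hs₀_def]
        field_simp
    _ ≤ Real.exp (Real.log (β s)) := Real.exp_le_exp.2 hlogβ
    _ = β s := Real.exp_log hβspos
end

section
/- Let k ≥ 1 be an integer and T > 0, and let β : ℝ → ℝ be nondecreasing on (0,T] with β(r) > 0 for all r ∈ (0,T]. Assume that for almost every r ∈ (0,T), whenever β is differentiable at r with derivative β′(r), one has β(r) ≤ (r/(k+1))·β′(r). Then the function r ↦ β(r)/r^{k+1} is nondecreasing on (0,T], i.e. β(a)/a^{k+1} ≤ β(b)/b^{k+1} whenever 0 < a ≤ b ≤ T. -/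
/-!
Where `β` is differentiable, the hypothesis says that `log β` grows at least as fast as
`log r^(k+1)`, i.e. `(k+1)/r ≤ (log β)'`. Since `log β` is monotone, the integral of its a.e.
derivative over `[a, b]` is at most its increment (a jump or singular part only adds to it), so
`(k+1)(log b - log a) ≤ log β(b) - log β(a)`.
-/

open MeasureTheory Set Real

theorem MonotoneOn.intervalIntegral_le_sub_of_ae_le_deriv {f φ : ℝ → ℝ} {a b : ℝ} (hab : a ≤ b)
    (hf : MonotoneOn f (Icc a b)) (hφ : IntervalIntegrable φ volume a b)
    (hle : ∀ᵐ x, x ∈ Ioo a b → φ x ≤ deriv f x) :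
    ∫ x in a..b, φ x ≤ f b - f a := by
  have hfab : f a ≤ f b := hf (left_mem_Icc.2 hab) (right_mem_Icc.2 hab) hab
  rw [← uIcc_of_le hab] at hf
  calc ∫ x in a..b, φ x ≤ ∫ x in a..b, deriv f x :=
        intervalIntegral.integral_mono_ae_restrict hab hφ hf.intervalIntegrable_deriv <| by
          rw [← restrict_Ioo_eq_restrict_Icc]
          exact (ae_restrict_iff' measurableSet_Ioo).2 hle
    _ ≤ f b - f a := by
      have := hf.intervalIntegral_deriv_mem_uIcc
      rw [uIcc_of_le (sub_nonneg.2 hfab)] at this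
      exact this.2

theorem le_deriv_log_of_mul_le {f : ℝ → ℝ} {x c d : ℝ} (hf : HasDerivAt f d x) (hx : 0 < f x)
    (h : c * f x ≤ d) : c ≤ deriv (fun y => log (f y)) x := by
  rwa [(hf.log hx.ne').deriv, le_div_iff₀ hx]

theorem ae_div_le_deriv_log_of_ae_le_div_mul_deriv {β : ℝ → ℝ} {p T : ℝ} (hp : 0 < p)
    (hmono : MonotoneOn β (Ioo 0 T)) (hpos : ∀ r ∈ Ioo 0 T, 0 < β r)
    (hae : ∀ᵐ r, r ∈ Ioo 0 T → ∀ d, HasDerivAt β d r → β r ≤ r / p * d) :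
    ∀ᵐ r, r ∈ Ioo 0 T → p / r ≤ deriv (fun x => log (β x)) r := by
  filter_upwards [hmono.ae_differentiableWithinAt_of_mem, hae] with r hdiff hle hr
  have hβ : HasDerivAt β (deriv β r) r :=
    ((hdiff hr).differentiableAt (isOpen_Ioo.mem_nhds hr)).hasDerivAt
  refine le_deriv_log_of_mul_le hβ (hpos r hr) ?_
  have := hle hr _ hβ
  rw [div_mul_eq_mul_div, le_div_iff₀ hp] at this
  rw [div_mul_eq_mul_div, div_le_iff₀ hr.1]
  linarith

theorem monotoneOn_div_rpow_of_ae_le_div_mul_deriv {β : ℝ → ℝ} {p T : ℝ} (hp : 0 < p)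
    (hmono : MonotoneOn β (Ioc 0 T)) (hpos : ∀ r ∈ Ioc 0 T, 0 < β r)
    (hae : ∀ᵐ r, r ∈ Ioo 0 T → ∀ d, HasDerivAt β d r → β r ≤ r / p * d) :
    MonotoneOn (fun r => β r / r ^ p) (Ioc 0 T) := by
  intro a ha b hb hab
  have hb0 : 0 < b := ha.1.trans_le hab
  have hsub : Icc a b ⊆ Ioc 0 T := Icc_subset_Ioc_iff hab |>.2 ⟨ha.1, hb.2⟩
  have hlog_mono : MonotoneOn (fun r => log (β r)) (Icc a b) := fun x hx y hy hxy =>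
    log_le_log (hpos x (hsub hx)) (hmono (hsub hx) (hsub hy) hxy)
  have hlog_deriv : ∀ᵐ x, x ∈ Ioo a b → p / x ≤ deriv (fun r => log (β r)) x := by
    filter_upwards [ae_div_le_deriv_log_of_ae_le_div_mul_deriv hp
      (hmono.mono Ioo_subset_Ioc_self) (fun r hr => hpos r (Ioo_subset_Ioc_self hr)) hae]
      with x hx hxab
    exact hx ⟨ha.1.trans hxab.1, hxab.2.trans_le hb.2⟩
  have hintegrable : IntervalIntegrable (fun x => p / x) volume a b :=
    (continuousOn_const.div continuousOn_id fun x hx =>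
      (ha.1.trans_le (uIcc_of_le hab ▸ hx).1).ne').intervalIntegrable
  have hintegral : ∫ x in a..b, p / x = p * (log b - log a) := by
    simp_rw [div_eq_mul_inv p]
    rw [intervalIntegral.integral_const_mul, integral_inv_of_pos ha.1 hb0, log_div hb0.ne' ha.1.ne']
  have hincrement := hlog_mono.intervalIntegral_le_sub_of_ae_le_deriv hab hintegrable hlog_deriv
  rw [hintegral] at hincrement
  have hβa := hpos a ha
  have hβb := hpos b hb
  have hap := rpow_pos_of_pos ha.1 p
  have hbp := rpow_pos_of_pos hb0 p
  rw [← log_le_log_iff (div_pos hβa hap) (div_pos hβb hbp), log_div hβa.ne' hap.ne',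
    log_div hβb.ne' hbp.ne', log_rpow ha.1, log_rpow hb0]
  linarith

theorem monotonicity_formula_integration_general (k : ℕ) (T : ℝ)
    (β : ℝ → ℝ)
    (hmono : MonotoneOn β (Set.Ioc (0:ℝ) T))
    (hpos : ∀ r ∈ Set.Ioc (0:ℝ) T, 0 < β r)
    (hae : ∀ᵐ r ∂volume, r ∈ Set.Ioo (0:ℝ) T → ∀ d : ℝ, HasDerivAt β d r →
      β r ≤ r / ((k : ℝ) + 1) * d) :
    ∀ a b : ℝ, 0 < a → a ≤ b → b ≤ T → β a / a ^ (k + 1) ≤ β b / b ^ (k + 1) := by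
  intro a b ha hab hbT
  have := monotoneOn_div_rpow_of_ae_le_div_mul_deriv (by positivity) hmono hpos hae
    ⟨ha, hab.trans hbT⟩ ⟨ha.trans_le hab, hbT⟩ hab
  simpa only [← Nat.cast_add_one, rpow_natCast] using this

/-- **Integration step in the monotonicity formula (Corollary 4.3 of the paper).**
Let `k ≥ 1`, `T > 0`, and let `β : ℝ → ℝ` be nondecreasing on `(0,T]` with `β(r) > 0` for all
`r ∈ (0,T]`.  If for almost every `r ∈ (0,T)`, whenever `β` is differentiable at `r` with
derivative `β′(r)`, one has `β(r) ≤ (r/(k+1))·β′(r)`, then `r ↦ β(r)/r^(k+1)` is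
nondecreasing on `(0,T]`. -/
theorem monotonicity_formula_integration (k : ℕ) (hk : 1 ≤ k) (T : ℝ) (hT : 0 < T)
    (β : ℝ → ℝ)
    (hmono : MonotoneOn β (Set.Ioc (0:ℝ) T))
    (hpos : ∀ r ∈ Set.Ioc (0:ℝ) T, 0 < β r)
    (hae : ∀ᵐ r ∂volume, r ∈ Set.Ioo (0:ℝ) T → ∀ d : ℝ, HasDerivAt β d r →
      β r ≤ r / ((k : ℝ) + 1) * d) :
    ∀ a b : ℝ, 0 < a → a ≤ b → b ≤ T → β a / a ^ (k + 1) ≤ β b / b ^ (k + 1) :=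
  monotonicity_formula_integration_general k T β hmono hpos hae
end
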